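/- Let X be a regular scheme with a regular weighted center J, B → X the full cobordant blow-up, I ⊆ O_X an ideal sheaf, and σ^s(I) = {t^a f ∈ O_B : f ∈ O_B · I, a ≥ 0} the strict transform of I. Then under the natural isomorphism O_B/(t^{-1}) ≅ gr_J(O_X), the restriction σ^s(I)|_{V(t^{-1})} corresponds to the ideal of initial forms in(I) = ⊕_a ((I ∩ (J^a)_X) + (J^{a+1})_X)/(J^{a+1})_X · t^a. -/

import Mathlib

open LaurentPolynomial DirectSum

/-- `u` is part of a regular system of parameters of the (regular) local ring `R`. -/
def IsPartialRegSystemOfParams {R : Type*} [CommRing R] [IsLocalRing R] {k : ℕ}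
    (u : Fin k → R) : Prop :=
  ∃ (n : ℕ) (v : Fin n → R) (e : Fin k ↪ Fin n),
    (∀ i, v (e i) = u i) ∧
    Ideal.span (Set.range v) = IsLocalRing.maximalIdeal R ∧
    ringKrullDim R = n

/-- The ideal of sections `(J^a)_X` of the `a`-th power of the weighted center `J`. -/
def sectionsPow {R : Type*} [CommRing R] {k : ℕ} (u : Fin k → R) (w : Fin k → ℕ)
    (a : ℕ) : Ideal R :=
  Ideal.span {y | ∃ c : Fin k → ℕ, a ≤ ∑ i, c i * w i ∧ y = ∏ i, u i ^ c i}

/-- The coordinate ring `O_B = O_X[t⁻¹, u₁ t^{w₁},…,u_k t^{w_k}]` of the full cobordant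
blow-up. -/
noncomputable def cobordantAlgebra {R : Type*} [CommRing R] {k : ℕ}
    (u : Fin k → R) (w : Fin k → ℕ) : Subalgebra R (LaurentPolynomial R) :=
  Algebra.adjoin R (insert (T (-1)) (Set.range fun i => C (u i) * T (w i)))

/-- The strict transform `σˢ(I) = {tᵃ·f ∈ O_B : f ∈ O_B·I, a ≥ 0}` of an ideal `I ⊆ O_X`
under the full cobordant blow-up. -/
noncomputable def strictTransform {R : Type*} [CommRing R] {k : ℕ}
    (u : Fin k → R) (w : Fin k → ℕ) (I : Ideal R) : Ideal (cobordantAlgebra u w) :=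
  Ideal.span {x : cobordantAlgebra u w | ∃ (a : ℕ) (y : cobordantAlgebra u w),
    y ∈ Ideal.span {z : cobordantAlgebra u w | ∃ g ∈ I, (z : LaurentPolynomial R) = C g} ∧
    (x : LaurentPolynomial R) = T (a : ℤ) * (y : LaurentPolynomial R)}


/-!
The coordinate ring `O_B` is the extended Rees algebra `⊕_{a ∈ ℤ} (J^a)_X tᵃ`, so every element
of `O_B` is a sum of monomials `h tᵃ` with `h ∈ (J^a)_X`. Those of negative degree are multiples
of `t⁻¹`, and `h tᵃ` with `a ≥ 0` is sent by `e` to the class of `h` in degree `a`. An element of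
the strict transform has all its coefficients in `I`, so its image is a sum of initial forms of
elements of `I ∩ (J^a)_X`; conversely, for such an `f` the monomial `f tᵃ` lies in the strict
transform and maps to the initial form of `f`.
-/

theorem AddMonoidAlgebra.coeff_mul_mem {R G σ : Type*} [Semiring R] [AddMonoid G]
    [SetLike σ R] [AddSubmonoidClass σ R] {A B S : G → σ} {f g : AddMonoidAlgebra R G}
    (hf : ∀ a, f.coeff a ∈ A a) (hg : ∀ b, g.coeff b ∈ B b)
    (hmul : ∀ a b x y, x ∈ A a → y ∈ B b → x * y ∈ S (a + b)) (n : G) :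
    (f * g).coeff n ∈ S n := by
  classical
  rw [coeff_mul]
  refine sum_mem fun a _ => sum_mem fun b _ => ?_
  dsimp only
  split_ifs with hab
  · exact hab ▸ hmul a b _ _ (hf a) (hg b)
  · exact zero_mem _

namespace LaurentPolynomial

variable {R : Type*} [CommRing R]

theorem eq_sum_C_mul_T (f : R[T;T⁻¹]) : f = ∑ a ∈ f.coeff.support, C (f.coeff a) * T a := by
  conv_lhs => rw [← AddMonoidAlgebra.sum_coeff_single f]
  exact Finset.sum_congr rfl fun a _ => single_eq_C_mul_T _ _

theorem coeff_C_mul_T (r : R) (a b : ℤ) :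
    (C r * T a : R[T;T⁻¹]).coeff b = if a = b then r else 0 := by
  rw [← single_eq_C_mul_T, AddMonoidAlgebra.coeff_single, Finsupp.single_apply]

def coeffIdeal (I : Ideal R) : Ideal R[T;T⁻¹] where
  carrier := {f | ∀ a, f.coeff a ∈ I}
  zero_mem' _ := zero_mem I
  add_mem' hf hg a := add_mem (hf a) (hg a)
  smul_mem' _ _ hf := AddMonoidAlgebra.coeff_mul_mem (A := fun _ => (⊤ : Ideal R))
    (fun _ => Submodule.mem_top) hf (fun _ _ x _ _ hy => I.mul_mem_left x hy)

end LaurentPolynomial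

section WeightedCenter

variable {R : Type*} [CommRing R] {k : ℕ} (u : Fin k → R) (w : Fin k → ℕ)

theorem sectionsPow_antitone : Antitone (sectionsPow u w) := fun _ _ hab =>
  Ideal.span_mono fun _ ⟨c, hc, hy⟩ => ⟨c, hab.trans hc, hy⟩

theorem sectionsPow_zero : sectionsPow u w 0 = ⊤ :=
  (Ideal.eq_top_iff_one _).mpr <| Ideal.subset_span ⟨0, by simp, by simp⟩

theorem sectionsPow_mul_le (a b : ℕ) :
    sectionsPow u w a * sectionsPow u w b ≤ sectionsPow u w (a + b) := by
  rw [sectionsPow, sectionsPow, Ideal.span_mul_span', Ideal.span_le]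
  rintro _ ⟨_, ⟨c, hc, rfl⟩, _, ⟨c', hc', rfl⟩, rfl⟩
  refine Ideal.subset_span ⟨c + c', ?_, by simp [pow_add, Finset.prod_mul_distrib]⟩
  simpa [add_mul, Finset.sum_add_distrib] using Nat.add_le_add hc hc'

/-- The extended Rees algebra `⊕_{a ∈ ℤ} (J^a)_X tᵃ`; `a.toNat` encodes `(J^a)_X = O_X` for
`a ≤ 0`. -/
def extendedRees : Subalgebra R R[T;T⁻¹] where
  carrier := {f | ∀ a : ℤ, f.coeff a ∈ sectionsPow u w a.toNat}
  mul_mem' hf hg := AddMonoidAlgebra.coeff_mul_mem hf hg fun a b _ _ hx hy =>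
    sectionsPow_antitone u w (show (a + b).toNat ≤ a.toNat + b.toNat by omega)
      (sectionsPow_mul_le u w _ _ (Ideal.mul_mem_mul hx hy))
  add_mem' hf hg a := add_mem (hf a) (hg a)
  algebraMap_mem' r a := by
    rw [← C_eq_algebraMap, C_apply]
    split_ifs with ha
    · simp [ha, sectionsPow_zero]
    · exact zero_mem _

theorem cobordantAlgebra_le_extendedRees : cobordantAlgebra u w ≤ extendedRees u w := by
  refine Algebra.adjoin_le ?_
  rintro _ (rfl | ⟨i, rfl⟩) a
  · rw [T_apply]
    split_ifs with ha
    · simp [← ha, sectionsPow_zero]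
    · exact zero_mem _
  · rw [coeff_C_mul_T]
    split_ifs with ha
    · exact Ideal.subset_span
        ⟨Pi.single i 1, by simp [← ha, Pi.single_apply], by simp [Pi.single_apply]⟩
    · exact zero_mem _

theorem C_mul_T_mem_cobordantAlgebra {h : R} {a : ℤ} (hh : h ∈ sectionsPow u w a.toNat) :
    C h * T a ∈ cobordantAlgebra u w := by
  suffices sectionsPow u w a.toNat ≤ (Subalgebra.toSubmodule (cobordantAlgebra u w)).comap
      (LinearMap.mulRight R (T a) ∘ₗ Algebra.linearMap R R[T;T⁻¹]) from this hh
  refine Ideal.span_le.mpr ?_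
  rintro _ ⟨c, hc, rfl⟩
  have hprod : (∏ i, (C (u i) * T (w i)) ^ c i : R[T;T⁻¹]) =
      C (∏ i, u i ^ c i) * T (∑ i, c i * w i : ℕ) := by
    simp only [← single_eq_C_mul_T, AddMonoidAlgebra.single_pow, AddMonoidAlgebra.prod_single]
    push_cast
    simp only [nsmul_eq_mul]
  have hsplit : C (∏ i, u i ^ c i) * T a =
      (∏ i, (C (u i) * T (w i)) ^ c i) * T (-1) ^ ((∑ i, c i * w i : ℕ) - a).toNat := by
    rw [hprod, T_pow, mul_T_assoc]
    congr 2
    omega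
  show C (∏ i, u i ^ c i) * T a ∈ cobordantAlgebra u w
  rw [hsplit]
  exact mul_mem (prod_mem fun i _ => pow_mem (Algebra.subset_adjoin
    (Set.mem_insert_of_mem _ (Set.mem_range_self i))) _)
    (pow_mem (Algebra.subset_adjoin (Set.mem_insert _ _)) _)

theorem cobordantAlgebra_eq_sum_C_mul_T (x : cobordantAlgebra u w) :
    x = ∑ a ∈ (x : R[T;T⁻¹]).coeff.support,
      ⟨C ((x : R[T;T⁻¹]).coeff a) * T a,
        C_mul_T_mem_cobordantAlgebra u w (cobordantAlgebra_le_extendedRees u w x.2 a)⟩ :=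
  Subtype.ext <| by rw [AddSubmonoidClass.coe_finsetSum]; exact eq_sum_C_mul_T _

theorem mem_span_singleton_of_eq_C_mul_T_of_neg {τ : cobordantAlgebra u w}
    (hτ : (τ : R[T;T⁻¹]) = T (-1))
    {z : cobordantAlgebra u w} {h : R} {a : ℤ} (ha : a < 0) (hz : (z : R[T;T⁻¹]) = C h * T a) :
    z ∈ Ideal.span {τ} := by
  have hmem : C h * T (a + 1) ∈ cobordantAlgebra u w :=
    C_mul_T_mem_cobordantAlgebra u w <| by
      simp [show (a + 1).toNat = 0 by omega, sectionsPow_zero]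
  refine Ideal.mem_span_singleton'.mpr ⟨⟨_, hmem⟩, Subtype.ext ?_⟩
  simp [hτ, hz, mul_T_assoc]

theorem strictTransform_le_comap_coeffIdeal (I : Ideal R) :
    strictTransform u w I ≤ (coeffIdeal I).comap (cobordantAlgebra u w).val := by
  refine Ideal.span_le.mpr ?_
  rintro _ ⟨a, y, hy, hx⟩
  have hyI : y ∈ (coeffIdeal I).comap (cobordantAlgebra u w).val := by
    refine Ideal.span_le.mpr ?_ hy
    rintro z ⟨g, hg, hz⟩ b
    rw [Subalgebra.val_apply, hz, C_apply]
    split_ifs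
    exacts [hg, zero_mem I]
  show _ ∈ coeffIdeal I
  rw [Subalgebra.val_apply, hx]
  exact (coeffIdeal I).mul_mem_left _ hyI

theorem C_mul_T_mem_strictTransform {I : Ideal R} {f : R} (hf : f ∈ I) (a : ℕ)
    {z : cobordantAlgebra u w} (hz : (z : R[T;T⁻¹]) = C f * T a) :
    z ∈ strictTransform u w I :=
  Ideal.subset_span ⟨a, ⟨C f, (cobordantAlgebra u w).algebraMap_mem f⟩,
    Ideal.subset_span ⟨f, hf, rfl⟩, by rw [hz, T_mul]⟩

end WeightedCenter

set_option synthInstance.maxHeartbeats 1000000 in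
theorem strict_transform_restricts_to_initial_forms_general
    {R : Type*} [CommRing R] {k : ℕ}
    (u : Fin k → R)
    (w : Fin k → ℕ)
    (τ : cobordantAlgebra u w) (hτ : (τ : LaurentPolynomial R) = T (-1))
    (I : Ideal R)
    (e : (cobordantAlgebra u w ⧸ (Ideal.span {τ} : Ideal (cobordantAlgebra u w))) ≃ₗ[R]
        ⨁ a : ℕ, (sectionsPow u w a ⧸
          Submodule.comap (sectionsPow u w a).subtype (sectionsPow u w (a + 1))))
    (he : ∀ (a : ℕ) (h : R) (hh : h ∈ sectionsPow u w a)
        (z : cobordantAlgebra u w) (hz : (z : LaurentPolynomial R) = C h * T a),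
        e (Ideal.Quotient.mk _ z) =
          DirectSum.of (fun a => (sectionsPow u w a ⧸
            Submodule.comap (sectionsPow u w a).subtype (sectionsPow u w (a + 1)))) a
            (Submodule.Quotient.mk ⟨h, hh⟩)) :
    Submodule.map
        (e.toLinearMap ∘ₗ
          (Ideal.Quotient.mkₐ R (Ideal.span {τ} : Ideal (cobordantAlgebra u w))).toLinearMap)
        (Submodule.restrictScalars R (strictTransform u w I)) =
      ⨆ a : ℕ,
        Submodule.map
          (DirectSum.lof R ℕ (fun a => (sectionsPow u w a ⧸
            Submodule.comap (sectionsPow u w a).subtype (sectionsPow u w (a + 1)))) a)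
          (Submodule.map
            (Submodule.mkQ (Submodule.comap (sectionsPow u w a).subtype
              (sectionsPow u w (a + 1))))
            (Submodule.comap (sectionsPow u w a).subtype
              (Submodule.restrictScalars R (I ⊓ sectionsPow u w a)))) := by
  apply le_antisymm
  · rintro _ ⟨x, hx, rfl⟩
    have hxI := strictTransform_le_comap_coeffIdeal u w I hx
    rw [cobordantAlgebra_eq_sum_C_mul_T u w x, map_sum]
    refine sum_mem fun a _ => ?_
    obtain ha | ha := lt_or_ge a 0
    · convert Submodule.zero_mem _
      exact e.map_eq_zero_iff.mpr
        (Ideal.Quotient.eq_zero_iff_mem.mpr (mem_span_singleton_of_eq_C_mul_T_of_neg u w hτ ha rfl))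
    · lift a to ℕ using ha
      have hJ : (x : R[T;T⁻¹]).coeff a ∈ sectionsPow u w a := by
        simpa using cobordantAlgebra_le_extendedRees u w x.2 a
      refine Submodule.mem_iSup_of_mem a ⟨_, ⟨⟨_, hJ⟩, ⟨hxI a, hJ⟩, rfl⟩, ?_⟩
      rw [lof_eq_of]
      exact (he a _ hJ _ rfl).symm
  · refine iSup_le fun a => ?_
    rintro _ ⟨_, ⟨⟨f, hfJ⟩, hf, rfl⟩, rfl⟩
    have hz : C f * T a ∈ cobordantAlgebra u w :=
      C_mul_T_mem_cobordantAlgebra u w (by simpa using hfJ)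
    refine ⟨⟨_, hz⟩, C_mul_T_mem_strictTransform u w hf.1 a rfl, ?_⟩
    exact (he a f hfJ _ rfl).trans (lof_eq_of ..).symm

set_option synthInstance.maxHeartbeats 1000000 in
/-- With `B → X` the full cobordant blow-up of the regular weighted
center `J = (u₁^{1/w₁},…,u_k^{1/w_k})`, let
`e : O_B/(t⁻¹) ≅ gr_J(O_X) = ⊕_a (J^a)_X/(J^{a+1})_X` be the natural isomorphism (of
Statement 15, characterized by `h·tᵃ ↦ [h]` for `h ∈ (J^a)_X`).  Then `e` carries the
restriction `σˢ(I)|_{V(t⁻¹)}` of the strict transform of an ideal `I ⊆ O_X` onto the ideal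
of initial forms `in(I) = ⊕_a ((I ∩ (J^a)_X) + (J^{a+1})_X)/(J^{a+1})_X`. -/
theorem strict_transform_restricts_to_initial_forms
    {R : Type*} [CommRing R] [IsLocalRing R] [IsNoetherianRing R] {k : ℕ}
    (u : Fin k → R) (hu : IsPartialRegSystemOfParams u)
    (w : Fin k → ℕ) (hw : ∀ i, 0 < w i)
    (τ : cobordantAlgebra u w) (hτ : (τ : LaurentPolynomial R) = T (-1))
    (I : Ideal R)
    (e : (cobordantAlgebra u w ⧸ (Ideal.span {τ} : Ideal (cobordantAlgebra u w))) ≃ₗ[R]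
        ⨁ a : ℕ, (sectionsPow u w a ⧸
          Submodule.comap (sectionsPow u w a).subtype (sectionsPow u w (a + 1))))
    (he : ∀ (a : ℕ) (h : R) (hh : h ∈ sectionsPow u w a)
        (z : cobordantAlgebra u w) (hz : (z : LaurentPolynomial R) = C h * T a),
        e (Ideal.Quotient.mk _ z) =
          DirectSum.of (fun a => (sectionsPow u w a ⧸
            Submodule.comap (sectionsPow u w a).subtype (sectionsPow u w (a + 1)))) a
            (Submodule.Quotient.mk ⟨h, hh⟩)) :
    Submodule.map
        (e.toLinearMap ∘ₗ
          (Ideal.Quotient.mkₐ R (Ideal.span {τ} : Ideal (cobordantAlgebra u w))).toLinearMap)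
        (Submodule.restrictScalars R (strictTransform u w I)) =
      ⨆ a : ℕ,
        Submodule.map
          (DirectSum.lof R ℕ (fun a => (sectionsPow u w a ⧸
            Submodule.comap (sectionsPow u w a).subtype (sectionsPow u w (a + 1)))) a)
          (Submodule.map
            (Submodule.mkQ (Submodule.comap (sectionsPow u w a).subtype
              (sectionsPow u w (a + 1))))
            (Submodule.comap (sectionsPow u w a).subtype
              (Submodule.restrictScalars R (I ⊓ sectionsPow u w a)))) :=
  strict_transform_restricts_to_initial_forms_general u w τ hτ I e he
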